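/- arXiv:1507.01105 — 3 statements merged into one kernel-verified Lean document; each statement's English description precedes it below -/
import Mathlib

section
/- The coordinates X₅, X₆, X₇ are invariant under the coadjoint action K of G_NC, and moreover for fixed values ρ = X₅ ≠ 0, σ = X₆, τ = X₇, the orbit of any point (X₁,X₂,X₃,X₄,ρ,σ,τ) under K is all of ℝ⁴ × {(ρ,σ,τ)} provided ρ²α² − γβστ ≠ 0. -/
structure GNC where
  th : ℝ
  ph : ℝ
  ps : ℝ
  q1 : ℝ
  q2 : ℝ
  p1 : ℝ
  p2 : ℝ

noncomputable def mulG (a b c : ℝ) (g h : GNC) : GNC :=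
  ⟨g.th + h.th + a / 2 * ((g.q1 * h.p1 + g.q2 * h.p2) - (g.p1 * h.q1 + g.p2 * h.q2)),
   g.ph + h.ph + b / 2 * (g.p1 * h.p2 - g.p2 * h.p1),
   g.ps + h.ps + c / 2 * (g.q1 * h.q2 - g.q2 * h.q1),
   g.q1 + h.q1, g.q2 + h.q2, g.p1 + h.p1, g.p2 + h.p2⟩

structure X7 where
  x1 : ℝ
  x2 : ℝ
  x3 : ℝ
  x4 : ℝ
  x5 : ℝ
  x6 : ℝ
  x7 : ℝ

noncomputable def Kact (a b c : ℝ) (g : GNC) (X : X7) : X7 :=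
  ⟨X.x1 - a / 2 * g.q1 * X.x5 + b / 2 * g.p2 * X.x6,
   X.x2 - a / 2 * g.q2 * X.x5 - b / 2 * g.p1 * X.x6,
   X.x3 + c / 2 * g.q2 * X.x7 + a / 2 * g.p1 * X.x5,
   X.x4 - c / 2 * g.q1 * X.x7 + a / 2 * g.p2 * X.x5,
   X.x5, X.x6, X.x7⟩

theorem Kact_orbit (a b c : ℝ) (ha : 0 < a) (hb : 0 < b) (hc : 0 < c)
    (ρ σ τ : ℝ) (hρ : ρ ≠ 0) (hdet : ρ ^ 2 * a ^ 2 - c * b * σ * τ ≠ 0) :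
    (∀ (g : GNC) (X : X7),
      (Kact a b c g X).x5 = X.x5 ∧ (Kact a b c g X).x6 = X.x6 ∧
        (Kact a b c g X).x7 = X.x7) ∧
    ∀ X Y : X7, X.x5 = ρ → X.x6 = σ → X.x7 = τ →
      Y.x5 = ρ → Y.x6 = σ → Y.x7 = τ →
      ∃ g : GNC, Kact a b c g X = Y := by
  constructor
  · intro g X; exact ⟨rfl, rfl, rfl⟩
  · intro X Y h5 h6 h7 k5 k6 k7
    set D := ρ ^ 2 * a ^ 2 - c * b * σ * τ with hD
    set d1 := Y.x1 - X.x1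
    set d2 := Y.x2 - X.x2
    set d3 := Y.x3 - X.x3
    set d4 := Y.x4 - X.x4
    refine ⟨⟨0, 0, 0, (2 * b * σ * d4 - 2 * a * ρ * d1) / D,
      -(2 * a * ρ * d2 + 2 * b * σ * d3) / D,
      (2 * a * ρ * d3 + 2 * c * τ * d2) / D,
      (2 * a * ρ * d4 - 2 * c * τ * d1) / D⟩, ?_⟩
    simp only [Kact, h5, h6, h7]
    cases Y
    simp only [X7.mk.injEq] at *
    subst k5 k6 k7
    refine ⟨?_, ?_, ?_, ?_, rfl, rfl, rfl⟩ <;>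
    · field_simp
      ring
end

section
/- For nonzero reals ρ, σ, τ, the operators (U(θ,φ,ψ,q,p)f)(r₁,r₂) = exp(iρ(θ+αp₁r₁+αp₂r₂+(α/2)q₁p₁+(α/2)q₂p₂))·exp(iσ(φ+(β/2)p₁p₂))·exp(iτ(ψ+γq₂r₁+(γ/2)q₁q₂))·f(r₁+q₁, r₂+q₂+(σβ/(ρα))p₁) on L²(ℝ²) satisfy U(g)U(g') = U(g·g') for the group law of G_NC, i.e. U is a group homomorphism from G_NC to the unitary group of L²(ℝ²). -/
open Complex in
noncomputable def Uop (ρ σ τ a b c : ℝ) (g : GNC) (f : ℝ × ℝ → ℂ) : ℝ × ℝ → ℂ :=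
  fun r =>
    Complex.exp (Complex.I * ρ * (g.th + a * g.p1 * r.1 + a * g.p2 * r.2 +
        a / 2 * g.q1 * g.p1 + a / 2 * g.q2 * g.p2)) *
    Complex.exp (Complex.I * σ * (g.ph + b / 2 * g.p1 * g.p2)) *
    Complex.exp (Complex.I * τ * (g.ps + c * g.q2 * r.1 + c / 2 * g.q1 * g.q2)) *
    f (r.1 + g.q1, r.2 + g.q2 + σ * b / (ρ * a) * g.p1)

set_option maxHeartbeats 2000000 in
theorem Uop_hom (ρ σ τ a b c : ℝ) (hρ : ρ ≠ 0) (hσ : σ ≠ 0) (hτ : τ ≠ 0)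
    (ha : 0 < a) (hb : 0 < b) (hc : 0 < c) (g g' : GNC) (f : ℝ × ℝ → ℂ) :
    Uop ρ σ τ a b c g (Uop ρ σ τ a b c g' f) = Uop ρ σ τ a b c (mulG a b c g g') f := by
  have ha' : a ≠ 0 := ha.ne'
  funext r
  obtain ⟨k, hk⟩ : ∃ k : ℝ, σ * b = ρ * a * k :=
    ⟨σ * b / (ρ * a), by field_simp⟩
  have hkd : σ * b / (ρ * a) = k := by
    rw [hk, mul_div_cancel_left₀ _ (mul_ne_zero hρ ha')]
  have hkC : (σ : ℂ) * b = ρ * a * k := by exact_mod_cast hk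
  simp only [Uop, mulG, hkd]
  rw [show (r.1 + g.q1 + g'.q1, r.2 + g.q2 + k * g.p1 + g'.q2 + k * g'.p1)
      = (r.1 + (g.q1 + g'.q1), r.2 + (g.q2 + g'.q2) + k * (g.p1 + g'.p1)) by
    ext <;> simp <;> ring]
  simp only [← Complex.exp_add]
  rw [← mul_assoc, ← Complex.exp_add]
  congr 1
  congr 1
  push_cast
  linear_combination (-Complex.I * g.p1 * g'.p2) * hkC
end

section
/- The four one-parameter families of unitary operators on L²(ℝ²) given by (U(q₁)f)(r) = f(r₁+q₁,r₂), (U(q₂)f)(r) = e^{iτγq₂r₁}f(r₁,r₂+q₂), (U(p₁)f)(r) = e^{iραp₁r₁}f(r₁,r₂+(σβ/(ρα))p₁), (U(p₂)f)(r) = e^{iραp₂r₂}f(r) satisfy the Weyl commutation relations: U(q₁)U(p₁) = e^{iραq₁p₁}U(p₁)U(q₁), U(q₂)U(p₂) = e^{iραq₂p₂}U(p₂)U(q₂), U(q₁)U(q₂) = e^{iτγq₁q₂}U(q₂)U(q₁), U(p₁)U(p₂) = e^{iσβp₁p₂}U(p₂)U(p₁), U(q₁)U(p₂) = U(p₂)U(q₁),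 and U(q₂)U(p₁) = U(p₁)U(q₂). -/
noncomputable def Uq1 (a : ℝ) (f : ℝ × ℝ → ℂ) : ℝ × ℝ → ℂ :=
  fun r => f (r.1 + a, r.2)

noncomputable def Uq2 (τ c a : ℝ) (f : ℝ × ℝ → ℂ) : ℝ × ℝ → ℂ :=
  fun r => Complex.exp (Complex.I * τ * c * a * r.1) * f (r.1, r.2 + a)

noncomputable def Up1 (ρ σ α β a : ℝ) (f : ℝ × ℝ → ℂ) : ℝ × ℝ → ℂ :=
  fun r => Complex.exp (Complex.I * ρ * α * a * r.1) * f (r.1, r.2 + σ * β / (ρ * α) * a)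

noncomputable def Up2 (ρ α a : ℝ) (f : ℝ × ℝ → ℂ) : ℝ × ℝ → ℂ :=
  fun r => Complex.exp (Complex.I * ρ * α * a * r.2) * f r

theorem weyl_relations (ρ σ τ α β γ : ℝ) (hρ : ρ ≠ 0) (hσ : σ ≠ 0) (hτ : τ ≠ 0)
    (hα : 0 < α) (hβ : 0 < β) (hγ : 0 < γ) (q1 q2 p1 p2 : ℝ) (f : ℝ × ℝ → ℂ) :
    (Uq1 q1 (Up1 ρ σ α β p1 f) =
      fun r => Complex.exp (Complex.I * ρ * α * q1 * p1) * Up1 ρ σ α β p1 (Uq1 q1 f) r) ∧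
    (Uq2 τ γ q2 (Up2 ρ α p2 f) =
      fun r => Complex.exp (Complex.I * ρ * α * q2 * p2) * Up2 ρ α p2 (Uq2 τ γ q2 f) r) ∧
    (Uq1 q1 (Uq2 τ γ q2 f) =
      fun r => Complex.exp (Complex.I * τ * γ * q1 * q2) * Uq2 τ γ q2 (Uq1 q1 f) r) ∧
    (Up1 ρ σ α β p1 (Up2 ρ α p2 f) =
      fun r => Complex.exp (Complex.I * σ * β * p1 * p2) * Up2 ρ α p2 (Up1 ρ σ α β p1 f) r) ∧
    (Uq1 q1 (Up2 ρ α p2 f) = Up2 ρ α p2 (Uq1 q1 f)) ∧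
    (Uq2 τ γ q2 (Up1 ρ σ α β p1 f) = Up1 ρ σ α β p1 (Uq2 τ γ q2 f)) := by
  have hρC : (ρ : ℂ) ≠ 0 := by exact_mod_cast hρ
  have hαC : (α : ℂ) ≠ 0 := by exact_mod_cast hα.ne'
  refine ⟨?_, ?_, ?_, ?_, ?_, ?_⟩
  · funext r
    simp only [Uq1, Up1, ← mul_assoc, ← Complex.exp_add]
    congr 1
    push_cast
    ring
  · funext r
    simp only [Uq2, Up2, ← mul_assoc, ← Complex.exp_add]
    congr 1
    push_cast
    ring
  · funext r
    simp only [Uq1, Uq2, ← mul_assoc, ← Complex.exp_add]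
    congr 1
    push_cast
    ring
  · funext r
    simp only [Up1, Up2, ← mul_assoc, ← Complex.exp_add]
    congr 1
    push_cast
    congr 1
    field_simp
    ring
  · funext r
    simp only [Uq1, Up2, ← mul_assoc, ← Complex.exp_add]
  · funext r
    simp only [Uq2, Up1, ← mul_assoc, ← Complex.exp_add]
    congr 1
    · push_cast; ring
    · congr 1
      rw [Prod.mk.injEq]
      exact ⟨rfl, by ring⟩
end
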